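/- arXiv:1702.02652 — 2 statements merged into one kernel-verified Lean document; each statement's English description precedes it below -/
import Mathlib

section
/- Let K ≠ 0 and E ∈ ℝ with K·E < 0. Then f_K is differentiable at E with derivative f_K′(E) = sinh(√(−K·E)) / (2·√(−K·E)), where f_K(E) = ∑_{n=1}^∞ (−K)^{n−1} Eⁿ / (2n)!. (This is the formula f_K′(E) = sin √(K·E)/(2√(K·E)) when the argument of sin is imaginary.) -/
/-- The modified distance function
`f_K(E) = ∑_{n=1}^∞ (−K)^{n−1} Eⁿ / (2n)!` (indexed here by `n : ℕ`,
with `n` corresponding to the term of index `n+1 ≥ 1`). -/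
noncomputable def fK (K E : ℝ) : ℝ :=
  ∑' n : ℕ, (-K) ^ n * E ^ (n + 1) / (Nat.factorial (2 * (n + 1)) : ℝ)

lemma fK_eq_closed (K E : ℝ) (hK : K ≠ 0) (h : 0 ≤ -(K * E)) :
    fK K E = (1 - Real.cosh (Real.sqrt (-(K * E)))) / K := by
  set x : ℝ := -(K * E) with hx
  have hsum : HasSum (fun n : ℕ => x ^ n / (Nat.factorial (2 * n) : ℝ))
      (Real.cosh (Real.sqrt x)) := by
    have := Real.hasSum_cosh (Real.sqrt x)
    simpa [pow_mul, Real.sq_sqrt h] using this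
  have h2 : HasSum (fun n : ℕ => x ^ (n + 1) / (Nat.factorial (2 * (n + 1)) : ℝ))
      (Real.cosh (Real.sqrt x) - 1) := by
    rw [hasSum_nat_add_iff (f := fun n : ℕ => x ^ n / (Nat.factorial (2 * n) : ℝ)) 1]
    simpa using hsum
  have h3 : HasSum (fun n : ℕ => (-K) ^ n * E ^ (n + 1) / (Nat.factorial (2 * (n + 1)) : ℝ))
      ((-K)⁻¹ * (Real.cosh (Real.sqrt x) - 1)) := by
    have := h2.mul_left (-K)⁻¹
    convert this using 2 with n
    · rfl
    have hxn : x ^ (n + 1) = (-K) ^ (n + 1) * E ^ (n + 1) := by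
      rw [hx, ← mul_pow]; ring_nf
    rw [hxn]
    field_simp
    ring
  rw [fK, h3.tsum_eq, eq_div_iff hK]
  field_simp
  rw [neg_sub]

/-- For `K ≠ 0` and `K·E < 0`, `f_K` is differentiable at `E`
with derivative `sinh(√(−K·E)) / (2√(−K·E))`. -/
theorem modified_distance_hasDerivAt_sinh (K E : ℝ) (hK : K ≠ 0)
    (hKE : K * E < 0) :
    HasDerivAt (fK K)
      (Real.sinh (Real.sqrt (-(K * E))) / (2 * Real.sqrt (-(K * E)))) E := by
  set s : ℝ := Real.sqrt (-(K * E)) with hs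
  have hxpos : 0 < -(K * E) := by linarith
  have hspos : 0 < s := Real.sqrt_pos.2 hxpos
  -- derivative of the closed form
  have hinner : HasDerivAt (fun E' : ℝ => -(K * E')) (-K) E := by
    convert ((hasDerivAt_id' E).const_mul K).neg using 1
    · rfl
    · rfl
    · rfl
    ring
  have hsqrt : HasDerivAt (fun E' : ℝ => Real.sqrt (-(K * E')))
      (1 / (2 * s) * (-K)) E := by
    exact (Real.hasDerivAt_sqrt (ne_of_gt hxpos)).comp E hinner
  have hcosh : HasDerivAt (fun E' : ℝ => Real.cosh (Real.sqrt (-(K * E'))))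
      (Real.sinh s * (1 / (2 * s) * (-K))) E := by
    exact (Real.hasDerivAt_cosh s).comp E hsqrt
  have hg : HasDerivAt (fun E' : ℝ => (1 - Real.cosh (Real.sqrt (-(K * E')))) / K)
      (Real.sinh s / (2 * s)) E := by
    have := ((hasDerivAt_const E (1 : ℝ)).sub hcosh).div_const K
    convert this using 1
    · rfl
    · rfl
    · rfl
    field_simp
    ring
  -- fK agrees with the closed form near E
  have hev : (fun E' : ℝ => (1 - Real.cosh (Real.sqrt (-(K * E')))) / K) =ᶠ[nhds E] fK K := by
    have hopen : IsOpen {E' : ℝ | K * E' < 0} :=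
      isOpen_lt (continuous_const.mul continuous_id) continuous_const
    filter_upwards [hopen.mem_nhds hKE] with E' hE'
    exact (fK_eq_closed K E' hK (by linarith [hE'] : (0:ℝ) ≤ -(K * E'))).symm
  exact hg.congr_of_eventuallyEq hev.symm
end

section
/- Let V be a finite-dimensional real inner product space, let t₀ < b be reals, and let S, T : [t₀, b) → End(V) be differentiable maps such that S(t) and T(t) are self-adjoint for every t, and such that S′(t) + S(t)² + R_S(t) = 0 and T′(t) + T(t)² + R_T(t) = 0 on [t₀, b) for continuous self-adjoint-valued maps R_S, R_T : [t₀, b) → End(V). Suppose ⟨R_S(t)v, v⟩ ≤ ⟨R_T(t)v, v⟩ for all t ∈ [t₀, b) and v ∈ V, and ⟨S(t₀)v, v⟩ ≥ ⟨T(t₀)v, v⟩ for all v ∈ V. Then ⟨S(t)v, v⟩ ≥ ⟨T(t)v, v⟩ for all t ∈ [t₀, b) and v ∈ V, i.e., S(t) − T(t) is positive semidefinite for all t. (This is the matrix Riccati comparison theorem of Andersson and Howard underlying Theorem 4.2: along corresponding geodesics, smaller curvature operator R forces larger modified shape operator S.) -/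
open scoped RealInnerProductSpace

private theorem psd_kernel (V : Type*) [NormedAddCommGroup V] [InnerProductSpace ℝ V]
    (A : V →L[ℝ] V) (hsa : ∀ x y : V, ⟪A x, y⟫ = ⟪x, A y⟫)
    (hpsd : ∀ w : V, 0 ≤ ⟪A w, w⟫) (v : V) (hv : ⟪A v, v⟫ = 0) : A v = 0 := by
  have key : ∀ w : V, ⟪A v, w⟫ = 0 := by
    intro w
    set a := ⟪A v, w⟫ with ha
    set c := ⟪A w, w⟫ with hc
    have hc0 : 0 ≤ c := hpsd w
    have hq : ∀ s : ℝ, 0 ≤ 2 * s * a + s ^ 2 * c := by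
      intro s
      have h := hpsd (v + s • w)
      have hwv : ⟪A w, v⟫ = a := by rw [hsa w v, real_inner_comm]
      have hvw : ⟪v, A w⟫ = a := by rw [← hsa v w]
      have expand : ⟪A (v + s • w), v + s • w⟫ = ⟪A v, v⟫ + 2 * s * a + s ^ 2 * c := by
        rw [map_add, map_smul, inner_add_left, inner_add_right, inner_add_right,
          inner_smul_left, inner_smul_right, inner_smul_left, inner_smul_right]
        simp only [conj_trivial, hwv, hvw, ← ha, ← hc]
        ring
      rw [expand, hv] at h; linarith
    rcases eq_or_lt_of_le hc0 with hceq | hclt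
    · have h1 := hq 1
      have h2 := hq (-1)
      rw [← hceq] at h1 h2
      linarith
    · have h1 := hq (-(a / c))
      have hrw : 2 * (-(a / c)) * a + (-(a / c)) ^ 2 * c = -(a ^ 2 / c) := by
        field_simp; ring
      rw [hrw] at h1
      have ha2 : a ^ 2 ≤ 0 := by
        by_contra hcon
        push_neg at hcon
        have := div_pos hcon hclt
        linarith
      have h2 := sq_nonneg a
      have : a ^ 2 = 0 := le_antisymm ha2 h2
      exact pow_eq_zero_iff (by norm_num) |>.mp this
  exact inner_self_eq_zero.mp (key (A v))

set_option maxHeartbeats 1000000 in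
/-- matrix Riccati comparison, Andersson–Howard.
Let `V` be a finite-dimensional real inner product space, `t₀ < b`, and let
`S, T : [t₀, b) → End(V)` be differentiable, self-adjoint-valued solutions of
the matrix Riccati equations `S′ + S² + R_S = 0` and `T′ + T² + R_T = 0`,
with `R_S, R_T` continuous and self-adjoint valued.  If
`⟨R_S(t)v, v⟩ ≤ ⟨R_T(t)v, v⟩` on `[t₀, b)` and `⟨S(t₀)v, v⟩ ≥ ⟨T(t₀)v, v⟩`,
then `⟨S(t)v, v⟩ ≥ ⟨T(t)v, v⟩` for all `t ∈ [t₀, b)`, i.e. `S(t) − T(t)` is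
positive semidefinite. -/
theorem riccati_comparison
    (V : Type*) [NormedAddCommGroup V] [InnerProductSpace ℝ V]
    [FiniteDimensional ℝ V]
    (t₀ b : ℝ) (ht : t₀ < b)
    (S T RS RT : ℝ → (V →L[ℝ] V))
    -- `S` and `T` are differentiable on `[t₀, b)` and satisfy the Riccati
    -- equations `S′ = −(S² + R_S)`, `T′ = −(T² + R_T)` there:
    (hS : ∀ t ∈ Set.Ico t₀ b,
      HasDerivWithinAt S (-(S t * S t) - RS t) (Set.Ico t₀ b) t)
    (hT : ∀ t ∈ Set.Ico t₀ b,
      HasDerivWithinAt T (-(T t * T t) - RT t) (Set.Ico t₀ b) t)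
    -- self-adjointness of all the operators involved:
    (hSsa : ∀ t ∈ Set.Ico t₀ b, ∀ v w : V, ⟪S t v, w⟫ = ⟪v, S t w⟫)
    (hTsa : ∀ t ∈ Set.Ico t₀ b, ∀ v w : V, ⟪T t v, w⟫ = ⟪v, T t w⟫)
    (hRSsa : ∀ t ∈ Set.Ico t₀ b, ∀ v w : V, ⟪RS t v, w⟫ = ⟪v, RS t w⟫)
    (hRTsa : ∀ t ∈ Set.Ico t₀ b, ∀ v w : V, ⟪RT t v, w⟫ = ⟪v, RT t w⟫)
    -- continuity of the curvature terms:
    (hRScont : ContinuousOn RS (Set.Ico t₀ b))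
    (hRTcont : ContinuousOn RT (Set.Ico t₀ b))
    -- curvature comparison and initial condition:
    (hR : ∀ t ∈ Set.Ico t₀ b, ∀ v : V, ⟪RS t v, v⟫ ≤ ⟪RT t v, v⟫)
    (h0 : ∀ v : V, ⟪S t₀ v, v⟫ ≥ ⟪T t₀ v, v⟫) :
    ∀ t ∈ Set.Ico t₀ b, ∀ v : V, ⟪S t v, v⟫ ≥ ⟪T t v, v⟫ := by
  intro t₁ ht₁ v
  suffices hU : 0 ≤ ⟪S t₁ v - T t₁ v, v⟫ by
    rw [inner_sub_left] at hU
    linarith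
  have hI : Set.Icc t₀ t₁ ⊆ Set.Ico t₀ b := fun s hs => ⟨hs.1, lt_of_le_of_lt hs.2 ht₁.2⟩
  have hSc : ContinuousOn S (Set.Ico t₀ b) := fun s hs => (hS s hs).continuousWithinAt
  have hTc : ContinuousOn T (Set.Ico t₀ b) := fun s hs => (hT s hs).continuousWithinAt
  obtain ⟨MS, hMS⟩ := isCompact_Icc.exists_bound_of_continuousOn (hSc.mono hI)
  obtain ⟨MT, hMT⟩ := isCompact_Icc.exists_bound_of_continuousOn (hTc.mono hI)
  set M : ℝ := |MS| + |MT| with hMdef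
  have hM0 : 0 ≤ M := by positivity
  set K : ℝ := 2 * M + 1 with hKdef
  have hK0 : (0:ℝ) < K := by rw [hKdef]; linarith
  set ε₀ : ℝ := Real.exp (-(K * (t₁ - t₀))) with hε₀def
  have hε₀pos : 0 < ε₀ := Real.exp_pos _
  -- the main ε-perturbed claim
  have main : ∀ ε : ℝ, 0 < ε → ε < ε₀ → ∀ s ∈ Set.Icc t₀ t₁, ∀ w : V, ‖w‖ = 1 →
      0 < ⟪S s w - T s w, w⟫ + ε * Real.exp (K * (s - t₀)) := by
    intro ε hε hεlt
    by_contra hcon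
    push_neg at hcon
    obtain ⟨s₂, hs₂, w₂, hw₂, hle₂⟩ := hcon
    set Φ : ℝ × V → ℝ :=
      fun p => ⟪S p.1 p.2 - T p.1 p.2, p.2⟫ + ε * Real.exp (K * (p.1 - t₀)) with hΦdef
    set K₀ : Set (ℝ × V) := Set.Icc t₀ t₁ ×ˢ Metric.sphere (0:V) 1 with hK₀def
    have hK₀c : IsCompact K₀ := isCompact_Icc.prod (isCompact_sphere 0 1)
    have happ : ContinuousOn (fun p : ℝ × V => S p.1 p.2 - T p.1 p.2) K₀ := by
      have h1 : ContinuousOn (fun p : ℝ × V => S p.1) K₀ :=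
        (hSc.mono hI).comp continuousOn_fst (fun p hp => hp.1)
      have h2 : ContinuousOn (fun p : ℝ × V => T p.1) K₀ :=
        (hTc.mono hI).comp continuousOn_fst (fun p hp => hp.1)
      exact (h1.clm_apply continuousOn_snd).sub (h2.clm_apply continuousOn_snd)
    have hΦcont : ContinuousOn Φ K₀ := by
      rw [hΦdef]
      exact (happ.inner continuousOn_snd).add (Continuous.continuousOn (by fun_prop))
    set C : Set (ℝ × V) := K₀ ∩ Φ ⁻¹' Set.Iic 0 with hCdef
    have hCclosed : IsClosed C :=
      hΦcont.preimage_isClosed_of_isClosed hK₀c.isClosed isClosed_Iic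
    have hCc : IsCompact C := hK₀c.of_isClosed_subset hCclosed Set.inter_subset_left
    have hCne : C.Nonempty :=
      ⟨(s₂, w₂), ⟨hs₂, (Metric.mem_sphere).mpr (by simpa using hw₂)⟩, hle₂⟩
    set F : Set ℝ := Prod.fst '' C with hFdef
    have hFc : IsCompact F := hCc.image continuous_fst
    have hFne : F.Nonempty := hCne.image _
    obtain ⟨⟨τ, v₀⟩, hpC, hp1⟩ := hFc.sInf_mem hFne
    have hτIcc : τ ∈ Set.Icc t₀ t₁ := hpC.1.1
    have hv₀ : ‖v₀‖ = 1 := mem_sphere_zero_iff_norm.mp hpC.1.2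
    have hΦτ : Φ (τ, v₀) ≤ 0 := hpC.2
    have hτmin : ∀ s ∈ F, τ ≤ s := by
      intro s hs
      have : sInf F ≤ s := csInf_le hFc.bddBelow hs
      simpa [← hp1] using this
    have hbefore : ∀ s, s ∈ Set.Icc t₀ t₁ → s < τ → ∀ w : V, ‖w‖ = 1 → 0 < Φ (s, w) := by
      intro s hs hsτ w hw
      by_contra hle
      push_neg at hle
      have hsF : s ∈ F := ⟨(s, w), ⟨⟨hs, mem_sphere_zero_iff_norm.mpr hw⟩, hle⟩, rfl⟩
      exact absurd (hτmin s hsF) (not_le.mpr hsτ)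
    have hτI : τ ∈ Set.Ico t₀ b := hI hτIcc
    have hτ0 : t₀ < τ := by
      rcases lt_or_eq_of_le hτIcc.1 with h | h
      · exact h
      · exfalso
        have h1 : 0 ≤ ⟪S t₀ v₀ - T t₀ v₀, v₀⟫ := by
          rw [inner_sub_left]; linarith [h0 v₀]
        have h2 := hΦτ
        rw [hΦdef] at h2
        simp only [← h] at h2
        rw [sub_self, mul_zero, Real.exp_zero, mul_one] at h2
        linarith
    have hnb : (nhdsWithin τ (Set.Ico t₀ τ)).NeBot := by
      rw [← mem_closure_iff_nhdsWithin_neBot, closure_Ico (ne_of_lt hτ0)]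
      exact Set.right_mem_Icc.mpr hτIcc.1
    have hIcoIcc : Set.Ico t₀ τ ⊆ Set.Icc t₀ t₁ :=
      fun s hs => ⟨hs.1, (le_of_lt hs.2).trans hτIcc.2⟩
    -- nonnegativity of the form at τ for every unit vector
    have hge : ∀ w : V, ‖w‖ = 1 → 0 ≤ Φ (τ, w) := by
      intro w hw
      have hcont : ContinuousWithinAt (fun s => Φ (s, w)) (Set.Ico t₀ τ) τ := by
        have h1 : ContinuousOn (fun s => Φ (s, w)) (Set.Icc t₀ t₁) := by
          rw [hΦdef]
          refine ContinuousOn.add ?_ (Continuous.continuousOn (by fun_prop))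
          exact ContinuousOn.inner
            (((hSc.mono hI).clm_apply continuousOn_const).sub
              ((hTc.mono hI).clm_apply continuousOn_const)) continuousOn_const
        exact (h1 τ hτIcc).mono hIcoIcc
      haveI := hnb
      refine ge_of_tendsto hcont ?_
      filter_upwards [self_mem_nhdsWithin] with s hs
      exact le_of_lt (hbefore s (hIcoIcc hs) hs.2 w hw)
    set e : ℝ := Real.exp (K * (τ - t₀)) with hedef
    have hepos : 0 < e := Real.exp_pos _
    set c : ℝ := ε * e with hcdef
    have hcpos : 0 < c := mul_pos hε hepos
    have hc1 : c < 1 := by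
      have h1 : e ≤ Real.exp (K * (t₁ - t₀)) := by
        rw [hedef]
        exact Real.exp_le_exp.mpr (by nlinarith [hτIcc.2, hK0])
      have h2 : ε₀ * Real.exp (K * (t₁ - t₀)) = 1 := by
        rw [hε₀def, ← Real.exp_add]; simp
      have h3 : c ≤ ε * Real.exp (K * (t₁ - t₀)) := mul_le_mul_of_nonneg_left h1 hε.le
      have h4 : ε * Real.exp (K * (t₁ - t₀)) < ε₀ * Real.exp (K * (t₁ - t₀)) :=
        mul_lt_mul_of_pos_right hεlt (Real.exp_pos _)
      linarith
    -- the operator A = S τ - T τ + c • id is psd with A v₀ = 0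
    set A : V →L[ℝ] V := S τ - T τ + c • (ContinuousLinearMap.id ℝ V) with hAdef
    have hAapp : ∀ w : V, A w = S τ w - T τ w + c • w := by
      intro w
      simp [hAdef, ContinuousLinearMap.add_apply, ContinuousLinearMap.sub_apply,
        ContinuousLinearMap.smul_apply]
    have hAsa : ∀ x y : V, ⟪A x, y⟫ = ⟪x, A y⟫ := by
      intro x y
      rw [hAapp, hAapp, inner_add_left, inner_add_right, inner_sub_left, inner_sub_right,
        real_inner_smul_left, real_inner_smul_right, hSsa τ hτI, hTsa τ hτI]
    have hΦquad : ∀ w : V, ‖w‖ = 1 → Φ (τ, w) = ⟪A w, w⟫ := by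
      intro w hw
      have hww : ⟪w, w⟫ = (1:ℝ) := by
        rw [real_inner_self_eq_norm_sq, hw]; norm_num
      rw [hAapp, inner_add_left, real_inner_smul_left, hww, hΦdef]
      simp [hcdef, hedef]
    have hApsd : ∀ w : V, 0 ≤ ⟪A w, w⟫ := by
      intro w
      rcases eq_or_ne w 0 with rfl | hw0
      · simp
      · have hr : (0:ℝ) < ‖w‖ := norm_pos_iff.mpr hw0
        set u : V := ‖w‖⁻¹ • w with hudef
        have hun : ‖u‖ = 1 := norm_smul_inv_norm hw0
        have h1 : 0 ≤ ⟪A u, u⟫ := (hΦquad u hun) ▸ hge u hun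
        have hwu : w = ‖w‖ • u := by
          rw [hudef, smul_smul, mul_inv_cancel₀ (ne_of_gt hr), one_smul]
        have h2 : ⟪A w, w⟫ = ‖w‖ ^ 2 * ⟪A u, u⟫ := by
          conv_lhs => rw [hwu]
          rw [map_smul, real_inner_smul_left, real_inner_smul_right]; ring
        rw [h2]
        positivity
    have hAv₀ : ⟪A v₀, v₀⟫ = 0 :=
      le_antisymm (hΦquad v₀ hv₀ ▸ hΦτ) (hApsd v₀)
    have hker : A v₀ = 0 := psd_kernel V A hAsa hApsd v₀ hAv₀
    have hSv₀ : S τ v₀ = T τ v₀ - c • v₀ := by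
      have h := hAapp v₀
      rw [hker] at h
      have := h.symm
      rw [sub_add_eq_add_sub, sub_eq_zero] at this
      linear_combination (norm := abel) this
    -- derivative of g(s) = Φ(s, v₀) at τ within [t₀, τ]
    have hIccτ : Set.Icc t₀ τ ⊆ Set.Ico t₀ b :=
      fun s hs => hI ⟨hs.1, hs.2.trans hτIcc.2⟩
    have hder2 : HasDerivWithinAt (fun s => S s v₀ - T s v₀)
        ((-(S τ * S τ) - RS τ) v₀ - (-(T τ * T τ) - RT τ) v₀) (Set.Icc t₀ τ) τ := by
      have h1 := (((hS τ hτI).sub (hT τ hτI)).mono hIccτ).clm_apply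
        (hasDerivWithinAt_const τ (Set.Icc t₀ τ) v₀)
      simpa [ContinuousLinearMap.sub_apply] using h1
    have hder3 : HasDerivWithinAt (fun s => (⟪S s v₀ - T s v₀, v₀⟫ : ℝ))
        (⟪(-(S τ * S τ) - RS τ) v₀ - (-(T τ * T τ) - RT τ) v₀, v₀⟫) (Set.Icc t₀ τ) τ := by
      have h1 := hder2.inner (𝕜 := ℝ) (hasDerivWithinAt_const τ (Set.Icc t₀ τ) v₀)
      simpa using h1
    have hder4 : HasDerivWithinAt (fun s => ε * Real.exp (K * (s - t₀)))
        (ε * (K * e)) (Set.Icc t₀ τ) τ := by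
      have h1 : HasDerivAt (fun s : ℝ => K * (s - t₀)) K τ := by
        simpa using ((hasDerivAt_id τ).sub_const t₀).const_mul K
      have h2 := (h1.exp.const_mul ε).hasDerivWithinAt (s := Set.Icc t₀ τ)
      have h3 : ε * (Real.exp (K * (τ - t₀)) * K) = ε * (K * e) := by rw [hedef]; ring
      rw [h3] at h2
      exact h2
    set D : ℝ := ⟪(-(S τ * S τ) - RS τ) v₀ - (-(T τ * T τ) - RT τ) v₀, v₀⟫ + ε * (K * e)
      with hDdef
    have hgder : HasDerivWithinAt (fun s => Φ (s, v₀)) D (Set.Icc t₀ τ) τ := hder3.add hder4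
    -- D ≤ 0 since Φ(·, v₀) has a minimum at the right endpoint τ
    have hD0 : D ≤ 0 := by
      rw [hasDerivWithinAt_iff_tendsto_slope] at hgder
      have hsetEq : Set.Icc t₀ τ \ {τ} = Set.Ico t₀ τ := by
        ext s
        simp only [Set.mem_diff, Set.mem_Icc, Set.mem_Ico, Set.mem_singleton_iff]
        constructor
        · rintro ⟨⟨h1, h2⟩, h3⟩; exact ⟨h1, lt_of_le_of_ne h2 h3⟩
        · rintro ⟨h1, h2⟩; exact ⟨⟨h1, h2.le⟩, ne_of_lt h2⟩
      rw [hsetEq] at hgder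
      haveI := hnb
      refine le_of_tendsto hgder ?_
      filter_upwards [self_mem_nhdsWithin] with s hs
      have h1 : 0 ≤ Φ (s, v₀) := le_of_lt (hbefore s (hIcoIcc hs) hs.2 v₀ hv₀)
      have hΦτ0 : Φ (τ, v₀) = 0 := hΦquad v₀ hv₀ ▸ hAv₀
      rw [slope_def_field, hΦτ0]
      apply div_nonpos_of_nonneg_of_nonpos
      · simpa using h1
      · linarith [hs.2]
    -- but D > 0, contradiction
    have hx : |(⟪T τ v₀, v₀⟫ : ℝ)| ≤ M := by
      have h1 : |(⟪T τ v₀, v₀⟫ : ℝ)| ≤ ‖T τ v₀‖ * ‖v₀‖ := abs_real_inner_le_norm _ _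
      have h2 : ‖T τ v₀‖ ≤ ‖T τ‖ * ‖v₀‖ := (T τ).le_opNorm v₀
      have h3 : ‖T τ‖ ≤ MT := hMT τ hτIcc
      rw [hv₀] at h1 h2
      rw [hMdef]
      have := le_abs_self MT
      have := abs_nonneg MS
      linarith
    have hquadS : (⟪S τ (S τ v₀), v₀⟫ : ℝ) = ⟪S τ v₀, S τ v₀⟫ := hSsa τ hτI (S τ v₀) v₀
    have hquadT : (⟪T τ (T τ v₀), v₀⟫ : ℝ) = ⟪T τ v₀, T τ v₀⟫ := hTsa τ hτI (T τ v₀) v₀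
    have hSTnorm : (⟪S τ v₀, S τ v₀⟫ : ℝ)
        = ⟪T τ v₀, T τ v₀⟫ - 2 * c * ⟪T τ v₀, v₀⟫ + c ^ 2 := by
      rw [hSv₀]
      rw [inner_sub_left, inner_sub_right, inner_sub_right, real_inner_smul_left,
        real_inner_smul_left, real_inner_smul_right, real_inner_smul_right]
      have hvv : (⟪v₀, v₀⟫ : ℝ) = 1 := by
        rw [real_inner_self_eq_norm_sq, hv₀]; norm_num
      rw [hvv, real_inner_comm v₀ (T τ v₀)]
      ring
    have hDval : D = -(⟪S τ v₀, S τ v₀⟫ : ℝ) - ⟪RS τ v₀, v₀⟫ + ⟪T τ v₀, T τ v₀⟫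
        + ⟪RT τ v₀, v₀⟫ + ε * (K * e) := by
      rw [hDdef, inner_sub_left]
      simp only [ContinuousLinearMap.sub_apply, ContinuousLinearMap.neg_apply,
        ContinuousLinearMap.mul_apply, inner_sub_left, inner_neg_left]
      rw [hquadS, hquadT]
      ring
    have hRle : (⟪RS τ v₀, v₀⟫ : ℝ) ≤ ⟪RT τ v₀, v₀⟫ := hR τ hτI v₀
    have hDpos : 0 < D := by
      rw [hDval, hSTnorm]
      have hKe : ε * (K * e) = c * K := by rw [hcdef]; ring
      rw [hKe]
      have h1 : -M ≤ (⟪T τ v₀, v₀⟫ : ℝ) := neg_le_of_abs_le hx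
      have h2 : c * K = 2 * c * M + c := by rw [hKdef]; ring
      nlinarith [mul_le_mul_of_nonneg_left h1 (by linarith : (0:ℝ) ≤ 2 * c)]
    linarith
  -- pass to the limit ε → 0
  rcases eq_or_ne v 0 with rfl | hv0
  · simp
  · have hr : (0:ℝ) < ‖v‖ := norm_pos_iff.mpr hv0
    set u : V := ‖v‖⁻¹ • v with hudef
    have hun : ‖u‖ = 1 := norm_smul_inv_norm hv0
    have hvu : v = ‖v‖ • u := by
      rw [hudef, smul_smul, mul_inv_cancel₀ (ne_of_gt hr), one_smul]
    clear_value u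
    have ht₁Icc : t₁ ∈ Set.Icc t₀ t₁ := Set.right_mem_Icc.mpr ht₁.1
    set E : ℝ := Real.exp (K * (t₁ - t₀)) with hEdef
    have hEpos : 0 < E := Real.exp_pos _
    have hquad : 0 ≤ ⟪S t₁ u - T t₁ u, u⟫ := by
      by_contra hneg
      push_neg at hneg
      set q : ℝ := -⟪S t₁ u - T t₁ u, u⟫ with hqdef
      have hq : 0 < q := by rw [hqdef]; linarith
      set ε : ℝ := min (ε₀ / 2) (q / (2 * E)) with hεdef
      have hεpos : 0 < ε := lt_min (by linarith) (div_pos hq (by linarith))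
      have hεlt : ε < ε₀ := lt_of_le_of_lt (min_le_left _ _) (by linarith)
      have h := main ε hεpos hεlt t₁ ht₁Icc u hun
      have hεE : ε * E ≤ q / 2 := by
        have h1 : ε ≤ q / (2 * E) := min_le_right _ _
        have h2 : ε * E ≤ (q / (2 * E)) * E := mul_le_mul_of_nonneg_right h1 hEpos.le
        have h3 : (q / (2 * E)) * E = q / 2 := by field_simp
        linarith
      rw [← hEdef] at h
      have : (⟪S t₁ u - T t₁ u, u⟫ : ℝ) = -q := by rw [hqdef]; ring
      rw [this] at h
      linarith
    have hscale : (⟪S t₁ v - T t₁ v, v⟫ : ℝ) = ‖v‖ ^ 2 * ⟪S t₁ u - T t₁ u, u⟫ := by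
      conv_lhs => rw [hvu]
      rw [map_smul, map_smul, ← smul_sub, real_inner_smul_left, real_inner_smul_right]
      ring
    rw [hscale]
    positivity
end
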